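/- arXiv:1810.05288 — 6 statements merged into one kernel-verified Lean document; each statement's English description precedes it below -/
import Mathlib

section
/- Let g be a Lie algebra over a commutative ring R, r₁, r₂ ∈ g⊗g, and φ a surjective endomorphism of the Lie algebra g. Suppose the set of elements s ∈ g⊗g with (ad_a⊗1 + 1⊗ad_a)(s) = 0 for all a ∈ g equals RΩ for a fixed element Ω ∈ g⊗g. Then φ is a morphism of coboundary Lie bialgebras (g, ∂r₁) → (g, ∂r₂) if and only if (φ⊗φ)(r₁) − r₂ ∈ RΩ. -/
open TensorProduct

/-- The Lie bracket of `g` as an `R`-bilinear map. -/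
noncomputable def bk (R g : Type*) [CommRing R] [LieRing g] [LieAlgebra R g] :
    g →ₗ[R] g →ₗ[R] g :=
  LinearMap.mk₂ R (fun a b => ⁅a, b⁆) (fun _ _ _ => add_lie _ _ _)
    (fun _ _ _ => smul_lie _ _ _) (fun _ _ _ => lie_add _ _ _) (fun _ _ _ => lie_smul _ _ _)

/-- The operator `ad_a ⊗ 1 + 1 ⊗ ad_a` on `g ⊗ g`. -/
noncomputable def adT (R : Type*) {g : Type*} [CommRing R] [LieRing g] [LieAlgebra R g]
    (a : g) : g ⊗[R] g →ₗ[R] g ⊗[R] g :=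
  TensorProduct.map (bk R g a) LinearMap.id + TensorProduct.map LinearMap.id (bk R g a)

/-- The classical Yang–Baxter operator
`CYB(r) = [r₁₂,r₁₃] + [r₁₂,r₂₃] + [r₁₃,r₂₃] ∈ g ⊗ (g ⊗ g)`. -/
noncomputable def cyb (R : Type*) {g : Type*} [CommRing R] [LieRing g] [LieAlgebra R g]
    (r : g ⊗[R] g) : g ⊗[R] (g ⊗[R] g) :=
  (TensorProduct.map (TensorProduct.lift (bk R g)) LinearMap.id)
      (TensorProduct.tensorTensorTensorComm R g g g g (r ⊗ₜ r))
    + (TensorProduct.map LinearMap.id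
        ((TensorProduct.map (TensorProduct.lift (bk R g)) LinearMap.id).comp
          (TensorProduct.assoc R g g g).symm.toLinearMap))
        ((TensorProduct.assoc R g g (g ⊗[R] g)) (r ⊗ₜ r))
    + (TensorProduct.assoc R g g g)
        ((TensorProduct.map LinearMap.id (TensorProduct.lift (bk R g)))
          (TensorProduct.tensorTensorTensorComm R g g g g (r ⊗ₜ r)))

lemma map_adT {R : Type*} [CommRing R] {g : Type*} [LieRing g] [LieAlgebra R g]
    (φ : g →ₗ⁅R⁆ g) (a : g) (s : g ⊗[R] g) :
    TensorProduct.map φ.toLinearMap φ.toLinearMap (adT R a s)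
      = adT R (φ a) (TensorProduct.map φ.toLinearMap φ.toLinearMap s) := by
  have : (TensorProduct.map φ.toLinearMap φ.toLinearMap).comp (adT R a)
      = (adT R (φ a)).comp (TensorProduct.map φ.toLinearMap φ.toLinearMap) := by
    ext x y
    simp [adT, bk, tmul_add, add_tmul]
  exact DFunLike.congr_fun this s

/-- for a surjective Lie algebra endomorphism `φ` of `g`, and `r₁, r₂ ∈ g ⊗ g`,
assuming the ad-invariants of `g ⊗ g` are exactly `RΩ`, the map `φ` is a morphism of
coboundary Lie bialgebras `(g, ∂r₁) → (g, ∂r₂)` if and only if `(φ⊗φ)(r₁) - r₂ ∈ RΩ`. -/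
theorem stmt3 {R : Type*} [CommRing R] {g : Type*} [LieRing g] [LieAlgebra R g]
    (Ω : g ⊗[R] g)
    (hinv : {s : g ⊗[R] g | ∀ a : g, adT R a s = 0} = {s : g ⊗[R] g | ∃ c : R, s = c • Ω})
    (r₁ r₂ : g ⊗[R] g) (φ : g →ₗ⁅R⁆ g) (hφ : Function.Surjective φ) :
    (∀ a : g,
        TensorProduct.map φ.toLinearMap φ.toLinearMap (adT R a r₁) = adT R (φ a) r₂) ↔
      (∃ c : R, TensorProduct.map φ.toLinearMap φ.toLinearMap r₁ - r₂ = c • Ω) := by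
  have key : (∀ a : g,
      TensorProduct.map φ.toLinearMap φ.toLinearMap (adT R a r₁) = adT R (φ a) r₂) ↔
      ∀ b : g, adT R b (TensorProduct.map φ.toLinearMap φ.toLinearMap r₁ - r₂) = 0 := by
    constructor
    · intro h b
      obtain ⟨a, rfl⟩ := hφ b
      rw [map_sub, map_adT φ a r₁ |>.symm, h a, sub_self]
    · intro h a
      have := h (φ a)
      rw [map_sub, sub_eq_zero] at this
      rw [map_adT, this]
  rw [key]
  have := Set.ext_iff.mp hinv (TensorProduct.map φ.toLinearMap φ.toLinearMap r₁ - r₂)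
  exact this
end

section
/- Let R be an integral domain (containing Q), g a split simple Lie algebra over R with Casimir element Ω, and suppose r₁, r₂ are r-matrices on g with r_i + κ(r_i) = λ_i Ω where λ_i ∈ R are invertible. If r₂ = r₁ − μΩ for some μ ∈ R, then μ = 0 or μ = λ₁. (It suffices to assume CYB(r₁) = CYB(r₂) = 0, κ(r₁) = λ₁Ω − r₁, r₂ = r₁ − μΩ, and that [Ω₁₂, Ω₁₃] is a nonzero element of g⊗g⊗g that is torsion-free over R.) -/
open TensorProduct

/-- The element `[Ω₁₂, Ω₁₃] ∈ g ⊗ (g ⊗ g)`. -/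
noncomputable def br1213 (R : Type*) {g : Type*} [CommRing R] [LieRing g] [LieAlgebra R g]
    (Ω : g ⊗[R] g) : g ⊗[R] (g ⊗[R] g) :=
  (TensorProduct.map (TensorProduct.lift (bk R g)) LinearMap.id)
    (TensorProduct.tensorTensorTensorComm R g g g g (Ω ⊗ₜ Ω))

section Aux

variable (R g : Type*) [CommRing R] [LieRing g] [LieAlgebra R g]

@[simp] lemma bk_apply (a b : g) : bk R g a b = ⁅a, b⁆ := rfl

/-- `[x₁₂, y₁₃]` as bilinear map. -/
noncomputable def T1 : g ⊗[R] g →ₗ[R] g ⊗[R] g →ₗ[R] g ⊗[R] (g ⊗[R] g) :=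
  (TensorProduct.mk R _ _).compr₂
    ((TensorProduct.map (TensorProduct.lift (bk R g)) LinearMap.id) ∘ₗ
      (TensorProduct.tensorTensorTensorComm R g g g g).toLinearMap)

/-- `[x₁₂, y₂₃]` as bilinear map. -/
noncomputable def T2 : g ⊗[R] g →ₗ[R] g ⊗[R] g →ₗ[R] g ⊗[R] (g ⊗[R] g) :=
  (TensorProduct.mk R _ _).compr₂
    ((TensorProduct.map LinearMap.id
        ((TensorProduct.map (TensorProduct.lift (bk R g)) LinearMap.id).comp
          (TensorProduct.assoc R g g g).symm.toLinearMap)) ∘ₗ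
      (TensorProduct.assoc R g g (g ⊗[R] g)).toLinearMap)

/-- `[x₁₃, y₂₃]` as bilinear map. -/
noncomputable def T3 : g ⊗[R] g →ₗ[R] g ⊗[R] g →ₗ[R] g ⊗[R] (g ⊗[R] g) :=
  (TensorProduct.mk R _ _).compr₂
    ((TensorProduct.assoc R g g g).toLinearMap ∘ₗ
      (TensorProduct.map LinearMap.id (TensorProduct.lift (bk R g))) ∘ₗ
      (TensorProduct.tensorTensorTensorComm R g g g g).toLinearMap)

/-- swap of the first two factors of `g ⊗ (g ⊗ g)`. -/
noncomputable def swap12 : g ⊗[R] (g ⊗[R] g) →ₗ[R] g ⊗[R] (g ⊗[R] g) :=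
  (TensorProduct.assoc R g g g).toLinearMap ∘ₗ
    (TensorProduct.map (TensorProduct.comm R g g).toLinearMap LinearMap.id) ∘ₗ
    (TensorProduct.assoc R g g g).symm.toLinearMap

@[simp] lemma T1_tmul (a b c d : g) :
    T1 R g (a ⊗ₜ b) (c ⊗ₜ d) = ⁅a, c⁆ ⊗ₜ (b ⊗ₜ[R] d) := by
  simp [T1]

@[simp] lemma T2_tmul (a b c d : g) :
    T2 R g (a ⊗ₜ b) (c ⊗ₜ d) = a ⊗ₜ (⁅b, c⁆ ⊗ₜ[R] d) := by
  simp [T2]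

@[simp] lemma T3_tmul (a b c d : g) :
    T3 R g (a ⊗ₜ b) (c ⊗ₜ d) = a ⊗ₜ (c ⊗ₜ[R] ⁅b, d⁆) := by
  simp [T3]

@[simp] lemma swap12_tmul (a b c : g) :
    swap12 R g (a ⊗ₜ (b ⊗ₜ c)) = b ⊗ₜ (a ⊗ₜ[R] c) := by
  simp [swap12]

lemma cyb_eq (r : g ⊗[R] g) : cyb R r = T1 R g r r + T2 R g r r + T3 R g r r := rfl

lemma br_eq (Ω : g ⊗[R] g) : br1213 R Ω = T1 R g Ω Ω := rfl

/-- antisymmetry `σ([x₁₃,y₂₃]) = -[y₁₃,x₂₃]`-style identity. -/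
lemma swap12_T3 (u v : g ⊗[R] g) : swap12 R g (T3 R g u v) = - T3 R g v u := by
  induction u using TensorProduct.induction_on with
  | zero => simp
  | tmul a b =>
    induction v using TensorProduct.induction_on with
    | zero => simp
    | tmul c d =>
      rw [T3_tmul, swap12_tmul, T3_tmul, ← lie_skew b d, TensorProduct.tmul_neg,
        TensorProduct.tmul_neg]
    | add x y hx hy => simp only [map_add, LinearMap.add_apply, hx, hy, neg_add]
  | add x y hx hy => simp only [map_add, LinearMap.add_apply, hx, hy, neg_add]

end Aux

/-- over an integral domain `R` of characteristic `0`, if `r₁, r₂` are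
`r`-matrices with `rᵢ + κ(rᵢ) = λᵢΩ`, `λᵢ ∈ R*`, `Ω` ad-invariant, `[Ω₁₂,Ω₁₃]` a nonzero
torsion-free element, and `r₂ = r₁ - μΩ`, then `μ = 0` or `μ = λ₁`. -/
theorem stmt5 {R : Type*} [CommRing R] [IsDomain R] [Algebra ℚ R]
    {g : Type*} [LieRing g] [LieAlgebra R g]
    (Ω : g ⊗[R] g) (hΩinv : ∀ a : g, adT R a Ω = 0)
    (hbr : br1213 R Ω ≠ 0) (htfbr : ∀ c : R, c • br1213 R Ω = 0 → c = 0)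
    (r₁ r₂ : g ⊗[R] g) (lam₁ lam₂ : R) (h₁ : IsUnit lam₁) (h₂ : IsUnit lam₂)
    (hcyb₁ : cyb R r₁ = 0) (hcyb₂ : cyb R r₂ = 0)
    (hκ₁ : (TensorProduct.comm R g g) r₁ = lam₁ • Ω - r₁)
    (hκ₂ : r₂ + (TensorProduct.comm R g g) r₂ = lam₂ • Ω)
    (μ : R) (hμ : r₂ = r₁ - μ • Ω) :
    μ = 0 ∨ μ = lam₁ := by
  -- key invariance identity 1: T2 x Ω + T3 x Ω = 0 for all x
  have key1 : ∀ s t : g, (T2 R g (s ⊗ₜ t) + T3 R g (s ⊗ₜ t)) =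
      ((TensorProduct.mk R g (g ⊗[R] g)) s) ∘ₗ (adT R t) := by
    intro s t
    apply TensorProduct.ext'
    intro c d
    simp [adT, TensorProduct.tmul_add]
  have inv1 : ∀ x : g ⊗[R] g, T2 R g x Ω + T3 R g x Ω = 0 := by
    intro x
    induction x using TensorProduct.induction_on with
    | zero => simp
    | tmul s t =>
      have := congrArg (fun f => f Ω) (key1 s t)
      simpa [hΩinv t] using this
    | add x y hx hy =>
      have : (T2 R g x Ω + T3 R g x Ω) + (T2 R g y Ω + T3 R g y Ω) = 0 := by
        rw [hx, hy]; simp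
      simpa [map_add, LinearMap.add_apply, add_add_add_comm] using this
  -- key invariance identity 2: T1 Ω y + T2 Ω y = 0 for all y
  have key2 : ∀ s t : g, ∀ x : g ⊗[R] g,
      T1 R g x (s ⊗ₜ t) + T2 R g x (s ⊗ₜ t)
        = - (TensorProduct.assoc R g g g) ((adT R s x) ⊗ₜ t) := by
    intro s t x
    induction x using TensorProduct.induction_on with
    | zero => simp
    | tmul a b =>
      simp only [T1_tmul, T2_tmul, adT, LinearMap.add_apply, TensorProduct.map_tmul,
        bk_apply, LinearMap.id_coe, id_eq, TensorProduct.add_tmul, map_add,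
        TensorProduct.assoc_tmul, neg_add]
      rw [← lie_skew a s, ← lie_skew b s, TensorProduct.neg_tmul,
        TensorProduct.neg_tmul, TensorProduct.tmul_neg]
    | add x y hx hy =>
      simp only [map_add, LinearMap.add_apply, TensorProduct.add_tmul, neg_add]
      rw [add_add_add_comm, hx, hy]
  have inv2 : ∀ y : g ⊗[R] g, T1 R g Ω y + T2 R g Ω y = 0 := by
    intro y
    induction y using TensorProduct.induction_on with
    | zero => simp
    | tmul s t => simpa [hΩinv s] using key2 s t Ω
    | add x y hx hy =>
      have : (T1 R g Ω x + T2 R g Ω x) + (T1 R g Ω y + T2 R g Ω y) = 0 := by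
        rw [hx, hy]; simp
      simpa [map_add, add_add_add_comm] using this
  -- key identity 3: T1 (s⊗t) z = Φ_t (adT s z) - (map id (mk t ∘ bk s)) z
  have key3 : ∀ s t : g, ∀ z : g ⊗[R] g,
      T1 R g (s ⊗ₜ t) z =
        (TensorProduct.map LinearMap.id ((TensorProduct.mk R g g) t)) (adT R s z)
          - (TensorProduct.map LinearMap.id
              (((TensorProduct.mk R g g) t) ∘ₗ (bk R g s))) z := by
    intro s t z
    induction z using TensorProduct.induction_on with
    | zero => simp
    | tmul a b => simp [adT, TensorProduct.tmul_add]
    | add x y hx hy => simp [map_add, hx, hy]; abel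
  -- identity: swap12 ∘ T3 (t⊗s) = map id (mk t ∘ bk s)
  have key4 : ∀ s t : g, ∀ z : g ⊗[R] g,
      swap12 R g (T3 R g (t ⊗ₜ s) z)
        = (TensorProduct.map LinearMap.id
            (((TensorProduct.mk R g g) t) ∘ₗ (bk R g s))) z := by
    intro s t z
    induction z using TensorProduct.induction_on with
    | zero => simp
    | tmul a b => simp
    | add x y hx hy => simp [map_add, hx, hy]
  -- C1 : T1 w Ω = - swap12 (T3 (comm w) Ω)
  have keyC1 : ∀ w : g ⊗[R] g,
      T1 R g w Ω = - swap12 R g (T3 R g ((TensorProduct.comm R g g) w) Ω) := by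
    intro w
    induction w using TensorProduct.induction_on with
    | zero => simp
    | tmul s t =>
      rw [key3 s t Ω, hΩinv s, TensorProduct.comm_tmul, key4 s t Ω]
      simp
    | add x y hx hy => simp [map_add, LinearMap.add_apply, hx, hy]; abel
  -- mixed term: T1 r₁ Ω + T3 Ω r₁ = lam₁ • T3 Ω Ω
  have mixed : T1 R g r₁ Ω + T3 R g Ω r₁ = lam₁ • T3 R g Ω Ω := by
    rw [keyC1 r₁, hκ₁]
    rw [map_sub, map_smul, LinearMap.sub_apply, LinearMap.smul_apply, map_sub, map_smul,
      swap12_T3, swap12_T3]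
    simp [smul_neg]
  -- all Ω-Ω terms: T2 Ω Ω = -T3 Ω Ω, T1 Ω Ω = T3 Ω Ω
  have hT2 : T2 R g Ω Ω = - T3 R g Ω Ω := eq_neg_of_add_eq_zero_left (inv1 Ω)
  have hT1 : T1 R g Ω Ω = T3 R g Ω Ω := by
    have h := inv2 Ω
    rw [hT2] at h
    linear_combination (norm := module) h
  -- expansion of cyb r₂
  have expand : cyb R r₂ = cyb R r₁
      - μ • ((T2 R g r₁ Ω + T3 R g r₁ Ω) + (T1 R g Ω r₁ + T2 R g Ω r₁)
          + (T1 R g r₁ Ω + T3 R g Ω r₁))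
      + (μ * μ) • (T1 R g Ω Ω + T2 R g Ω Ω + T3 R g Ω Ω) := by
    rw [cyb_eq, cyb_eq, hμ]
    simp only [map_sub, map_smul, LinearMap.sub_apply, LinearMap.smul_apply, smul_sub,
      smul_smul]
    module
  rw [hcyb₁, hcyb₂, inv1 r₁, inv2 r₁, mixed, hT1, hT2] at expand
  have hz : (μ * μ - μ * lam₁) • T3 R g Ω Ω = 0 := by
    linear_combination (norm := module) - expand
  have hbr3 : br1213 R Ω = T3 R g Ω Ω := (br_eq R g Ω).trans hT1
  have h0 : μ * μ - μ * lam₁ = 0 := htfbr _ (by rw [hbr3]; exact hz)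
  have : μ * (μ - lam₁) = 0 := by linear_combination h0
  rcases mul_eq_zero.mp this with h | h
  · exact Or.inl h
  · exact Or.inr (sub_eq_zero.mp h)
end

section
/- Let R be an integral domain of characteristic 0, g a split simple Lie algebra over R with Casimir Ω, and r an r-matrix on g with r + κ(r) = λΩ, λ ∈ R invertible. Let α, β ∈ R be invertible. If the Lie bialgebras (g, ∂(αr)) and (g, ∂(βr)) are isomorphic, then β = α or β = −α. -/
open TensorProduct

namespace S6

variable (R : Type*) {g : Type*} [CommRing R] [LieRing g] [LieAlgebra R g]

noncomputable def LL1 : (g ⊗[R] g) ⊗[R] (g ⊗[R] g) →ₗ[R] g ⊗[R] (g ⊗[R] g) :=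
  (TensorProduct.map (TensorProduct.lift (bk R g)) LinearMap.id) ∘ₗ
    (TensorProduct.tensorTensorTensorComm R g g g g).toLinearMap

noncomputable def LL2 : (g ⊗[R] g) ⊗[R] (g ⊗[R] g) →ₗ[R] g ⊗[R] (g ⊗[R] g) :=
  (TensorProduct.map LinearMap.id
      ((TensorProduct.map (TensorProduct.lift (bk R g)) LinearMap.id).comp
        (TensorProduct.assoc R g g g).symm.toLinearMap)) ∘ₗ
    (TensorProduct.assoc R g g (g ⊗[R] g)).toLinearMap

noncomputable def LL3 : (g ⊗[R] g) ⊗[R] (g ⊗[R] g) →ₗ[R] g ⊗[R] (g ⊗[R] g) :=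
  (TensorProduct.assoc R g g g).toLinearMap ∘ₗ
    (TensorProduct.map LinearMap.id (TensorProduct.lift (bk R g))) ∘ₗ
    (TensorProduct.tensorTensorTensorComm R g g g g).toLinearMap

noncomputable def LLs : (g ⊗[R] g) ⊗[R] (g ⊗[R] g) →ₗ[R] g ⊗[R] (g ⊗[R] g) :=
  LL1 R + LL2 R + LL3 R

variable {R}

@[simp] lemma bk_apply (a b : g) : bk R g a b = ⁅a, b⁆ := rfl

@[simp] lemma LL1_tmul (a b c d : g) :
    LL1 R ((a ⊗ₜ[R] b) ⊗ₜ (c ⊗ₜ d)) = ⁅a, c⁆ ⊗ₜ (b ⊗ₜ d) := by simp [LL1]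

@[simp] lemma LL2_tmul (a b c d : g) :
    LL2 R ((a ⊗ₜ[R] b) ⊗ₜ (c ⊗ₜ d)) = a ⊗ₜ (⁅b, c⁆ ⊗ₜ d) := by simp [LL2]

@[simp] lemma LL3_tmul (a b c d : g) :
    LL3 R ((a ⊗ₜ[R] b) ⊗ₜ (c ⊗ₜ d)) = a ⊗ₜ (c ⊗ₜ ⁅b, d⁆) := by simp [LL3]

lemma LL1_left (a b : g) (y : g ⊗[R] g) :
    LL1 R ((a ⊗ₜ b) ⊗ₜ y) =
      TensorProduct.map (bk R g a) (TensorProduct.mk R g g b) y := by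
  induction y using TensorProduct.induction_on with
  | zero => simp
  | tmul c d => simp
  | add u v hu hv => simp [tmul_add, hu, hv]

lemma LL2_left (a b : g) (y : g ⊗[R] g) :
    LL2 R ((a ⊗ₜ b) ⊗ₜ y) =
      (TensorProduct.mk R g (g ⊗[R] g) a)
        (TensorProduct.map (bk R g b) LinearMap.id y) := by
  induction y using TensorProduct.induction_on with
  | zero => simp
  | tmul c d => simp
  | add u v hu hv => simp [tmul_add, hu, hv]

lemma LL3_left (a b : g) (y : g ⊗[R] g) :
    LL3 R ((a ⊗ₜ b) ⊗ₜ y) =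
      (TensorProduct.mk R g (g ⊗[R] g) a)
        (TensorProduct.map LinearMap.id (bk R g b) y) := by
  induction y using TensorProduct.induction_on with
  | zero => simp
  | tmul c d => simp
  | add u v hu hv => simp [tmul_add, hu, hv]

lemma LL1_right (a b : g) (y : g ⊗[R] g) :
    LL1 R (y ⊗ₜ (a ⊗ₜ b)) =
      - TensorProduct.map (bk R g a) ((TensorProduct.mk R g g).flip b) y := by
  induction y using TensorProduct.induction_on with
  | zero => simp
  | tmul c d =>
    simp only [LL1_tmul, TensorProduct.map_tmul, LinearMap.flip_apply,
      TensorProduct.mk_apply, bk_apply]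
    rw [← lie_skew a c, neg_tmul, neg_neg]
  | add u v hu hv => simp [add_tmul, hu, hv]; abel

lemma LL2_right (a b : g) (y : g ⊗[R] g) :
    LL2 R (y ⊗ₜ (a ⊗ₜ b)) =
      - TensorProduct.map LinearMap.id
          (((TensorProduct.mk R g g).flip b) ∘ₗ (bk R g a)) y := by
  induction y using TensorProduct.induction_on with
  | zero => simp
  | tmul c d =>
    simp only [LL2_tmul, TensorProduct.map_tmul, LinearMap.id_coe, id_eq,
      LinearMap.coe_comp, Function.comp_apply, LinearMap.flip_apply,
      TensorProduct.mk_apply, bk_apply]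
    rw [← lie_skew a d, neg_tmul, tmul_neg, neg_neg]
  | add u v hu hv => simp [add_tmul, hu, hv]; abel

lemma LL3_right (a b : g) (y : g ⊗[R] g) :
    LL3 R (y ⊗ₜ (a ⊗ₜ b)) =
      - TensorProduct.map LinearMap.id
          ((TensorProduct.mk R g g a) ∘ₗ (bk R g b)) y := by
  induction y using TensorProduct.induction_on with
  | zero => simp
  | tmul c d =>
    simp only [LL3_tmul, TensorProduct.map_tmul, LinearMap.id_coe, id_eq,
      LinearMap.coe_comp, Function.comp_apply, TensorProduct.mk_apply, bk_apply]
    rw [← lie_skew b d, tmul_neg, tmul_neg, neg_neg]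
  | add u v hu hv => simp [add_tmul, hu, hv]; abel


lemma map_split (f : g →ₗ[R] g) (k : g →ₗ[R] g ⊗[R] g) :
    TensorProduct.map f k =
      (TensorProduct.map LinearMap.id k) ∘ₗ (TensorProduct.map f LinearMap.id) := by
  rw [← TensorProduct.map_comp]; simp

lemma map_id_comp (f : g →ₗ[R] g) (k : g →ₗ[R] g ⊗[R] g) :
    TensorProduct.map (LinearMap.id : g →ₗ[R] g) (k ∘ₗ f) =
      (TensorProduct.map (LinearMap.id : g →ₗ[R] g) k) ∘ₗ
        (TensorProduct.map (LinearMap.id : g →ₗ[R] g) f) := by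
  rw [← TensorProduct.map_comp]; simp

lemma adT_eq (a : g) :
    TensorProduct.map (bk R g a) LinearMap.id + TensorProduct.map LinearMap.id (bk R g a)
      = adT R a := rfl

lemma K1 (y : g ⊗[R] g) (hy : ∀ a : g, adT R a y = 0) (x : g ⊗[R] g) :
    LL2 R (x ⊗ₜ y) + LL3 R (x ⊗ₜ y) = 0 := by
  induction x using TensorProduct.induction_on with
  | zero => simp
  | tmul a b =>
    rw [LL2_left, LL3_left, ← map_add, ← LinearMap.add_apply, adT_eq, hy b, map_zero]
  | add u v hu hv =>
    rw [add_tmul, map_add, map_add]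
    rw [show LL2 R (u ⊗ₜ y) + LL2 R (v ⊗ₜ y) + (LL3 R (u ⊗ₜ y) + LL3 R (v ⊗ₜ y))
      = (LL2 R (u ⊗ₜ y) + LL3 R (u ⊗ₜ y)) + (LL2 R (v ⊗ₜ y) + LL3 R (v ⊗ₜ y)) by abel,
      hu, hv, add_zero]

lemma K2 (y : g ⊗[R] g) (hy : ∀ a : g, adT R a y = 0) (x : g ⊗[R] g) :
    LL1 R (y ⊗ₜ x) + LL2 R (y ⊗ₜ x) = 0 := by
  induction x using TensorProduct.induction_on with
  | zero => simp
  | tmul a b =>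
    rw [LL1_right, LL2_right, map_split (bk R g a) ((TensorProduct.mk R g g).flip b),
      map_id_comp (bk R g a) ((TensorProduct.mk R g g).flip b)]
    rw [LinearMap.comp_apply, LinearMap.comp_apply, ← neg_add, ← map_add,
      ← LinearMap.add_apply, adT_eq, hy a, map_zero, neg_zero]
  | add u v hu hv =>
    rw [tmul_add, map_add, map_add]
    rw [show LL1 R (y ⊗ₜ u) + LL1 R (y ⊗ₜ v) + (LL2 R (y ⊗ₜ u) + LL2 R (y ⊗ₜ v))
      = (LL1 R (y ⊗ₜ u) + LL2 R (y ⊗ₜ u)) + (LL1 R (y ⊗ₜ v) + LL2 R (y ⊗ₜ v)) by abel,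
      hu, hv, add_zero]

lemma K3pure (Ω : g ⊗[R] g) (hΩ : ∀ a : g, adT R a Ω = 0) (a b : g) :
    LL1 R ((a ⊗ₜ b) ⊗ₜ Ω) + LL3 R (Ω ⊗ₜ (a ⊗ₜ b)) =
      - TensorProduct.map LinearMap.id ((TensorProduct.mk R g g b) ∘ₗ (bk R g a)) Ω
      - TensorProduct.map LinearMap.id ((TensorProduct.mk R g g a) ∘ₗ (bk R g b)) Ω := by
  have h1 : TensorProduct.map (bk R g a) LinearMap.id Ω
      = - TensorProduct.map LinearMap.id (bk R g a) Ω := by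
    rw [eq_neg_iff_add_eq_zero, ← LinearMap.add_apply, adT_eq]
    exact hΩ a
  rw [LL1_left, LL3_right, map_split (bk R g a) (TensorProduct.mk R g g b),
    LinearMap.comp_apply, h1, map_neg,
    ← LinearMap.comp_apply (TensorProduct.map LinearMap.id (TensorProduct.mk R g g b)),
    ← map_id_comp]
  abel

lemma Fsym (Om : g ⊗[R] g) (hOm : ∀ a : g, adT R a Om = 0) (x : g ⊗[R] g) :
    LL1 R ((TensorProduct.comm R g g x) ⊗ₜ Om)
        + LL3 R (Om ⊗ₜ (TensorProduct.comm R g g x))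
      = LL1 R (x ⊗ₜ Om) + LL3 R (Om ⊗ₜ x) := by
  induction x using TensorProduct.induction_on with
  | zero => simp
  | tmul a b => rw [TensorProduct.comm_tmul, K3pure Om hOm a b, K3pure Om hOm b a]; abel
  | add u v hu hv =>
    rw [map_add, add_tmul, tmul_add, map_add, map_add,
      show LL1 R ((TensorProduct.comm R g g) u ⊗ₜ[R] Om)
            + LL1 R ((TensorProduct.comm R g g) v ⊗ₜ[R] Om)
            + (LL3 R (Om ⊗ₜ[R] (TensorProduct.comm R g g) u)
              + LL3 R (Om ⊗ₜ[R] (TensorProduct.comm R g g) v))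
          = (LL1 R ((TensorProduct.comm R g g) u ⊗ₜ[R] Om)
              + LL3 R (Om ⊗ₜ[R] (TensorProduct.comm R g g) u))
            + (LL1 R ((TensorProduct.comm R g g) v ⊗ₜ[R] Om)
              + LL3 R (Om ⊗ₜ[R] (TensorProduct.comm R g g) v)) by abel,
      hu, hv, add_tmul, tmul_add, map_add, map_add]
    abel

lemma comm_comm (x : g ⊗[R] g) :
    TensorProduct.comm R g g (TensorProduct.comm R g g x) = x := by
  induction x using TensorProduct.induction_on with
  | zero => simp
  | tmul a b => simp
  | add u v hu hv => simp [hu, hv]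

lemma phi_lie (f : g ≃ₗ⁅R⁆ g) (a b : g) :
    f.toLinearEquiv.toLinearMap ⁅a, b⁆
      = ⁅f.toLinearEquiv.toLinearMap a, f.toLinearEquiv.toLinearMap b⁆ := by
  simp [LieEquiv.map_lie]

lemma adT_equiv (f : g ≃ₗ⁅R⁆ g) (a : g) (s : g ⊗[R] g) :
    TensorProduct.map f.toLinearEquiv.toLinearMap f.toLinearEquiv.toLinearMap (adT R a s)
      = adT R (f a) (TensorProduct.map f.toLinearEquiv.toLinearMap
          f.toLinearEquiv.toLinearMap s) := by
  induction s using TensorProduct.induction_on with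
  | zero => simp
  | tmul c d => simp [adT, LieEquiv.map_lie]
  | add u v hu hv => simp only [map_add, hu, hv]

lemma LL1_equiv (f : g ≃ₗ⁅R⁆ g) (x y : g ⊗[R] g) :
    TensorProduct.map f.toLinearEquiv.toLinearMap
        (TensorProduct.map f.toLinearEquiv.toLinearMap f.toLinearEquiv.toLinearMap)
        (LL1 R (x ⊗ₜ y))
      = LL1 R ((TensorProduct.map f.toLinearEquiv.toLinearMap f.toLinearEquiv.toLinearMap x)
          ⊗ₜ (TensorProduct.map f.toLinearEquiv.toLinearMap f.toLinearEquiv.toLinearMap y)) := by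
  induction x using TensorProduct.induction_on with
  | zero => simp
  | add u v hu hv => simp only [add_tmul, map_add, hu, hv]
  | tmul a b =>
    induction y using TensorProduct.induction_on with
    | zero => simp
    | add u v hu hv => simp only [tmul_add, map_add, hu, hv]
    | tmul c d => simp [LieEquiv.map_lie]

lemma LL2_equiv (f : g ≃ₗ⁅R⁆ g) (x y : g ⊗[R] g) :
    TensorProduct.map f.toLinearEquiv.toLinearMap
        (TensorProduct.map f.toLinearEquiv.toLinearMap f.toLinearEquiv.toLinearMap)
        (LL2 R (x ⊗ₜ y))
      = LL2 R ((TensorProduct.map f.toLinearEquiv.toLinearMap f.toLinearEquiv.toLinearMap x)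
          ⊗ₜ (TensorProduct.map f.toLinearEquiv.toLinearMap f.toLinearEquiv.toLinearMap y)) := by
  induction x using TensorProduct.induction_on with
  | zero => simp
  | add u v hu hv => simp only [add_tmul, map_add, hu, hv]
  | tmul a b =>
    induction y using TensorProduct.induction_on with
    | zero => simp
    | add u v hu hv => simp only [tmul_add, map_add, hu, hv]
    | tmul c d => simp [LieEquiv.map_lie]

lemma LL3_equiv (f : g ≃ₗ⁅R⁆ g) (x y : g ⊗[R] g) :
    TensorProduct.map f.toLinearEquiv.toLinearMap
        (TensorProduct.map f.toLinearEquiv.toLinearMap f.toLinearEquiv.toLinearMap)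
        (LL3 R (x ⊗ₜ y))
      = LL3 R ((TensorProduct.map f.toLinearEquiv.toLinearMap f.toLinearEquiv.toLinearMap x)
          ⊗ₜ (TensorProduct.map f.toLinearEquiv.toLinearMap f.toLinearEquiv.toLinearMap y)) := by
  induction x using TensorProduct.induction_on with
  | zero => simp
  | add u v hu hv => simp only [add_tmul, map_add, hu, hv]
  | tmul a b =>
    induction y using TensorProduct.induction_on with
    | zero => simp
    | add u v hu hv => simp only [tmul_add, map_add, hu, hv]
    | tmul c d => simp [LieEquiv.map_lie]

lemma comm_equiv (f : g ≃ₗ⁅R⁆ g) (x : g ⊗[R] g) :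
    TensorProduct.map f.toLinearEquiv.toLinearMap f.toLinearEquiv.toLinearMap
        (TensorProduct.comm R g g x)
      = TensorProduct.comm R g g
          (TensorProduct.map f.toLinearEquiv.toLinearMap f.toLinearEquiv.toLinearMap x) := by
  induction x using TensorProduct.induction_on with
  | zero => simp
  | tmul a b => simp
  | add u v hu hv => simp only [map_add, hu, hv]

lemma cyb_eq (r : g ⊗[R] g) : cyb R r = LLs R (r ⊗ₜ r) := rfl

lemma br_eq (Om : g ⊗[R] g) : br1213 R Om = LL1 R (Om ⊗ₜ Om) := rfl

lemma LLs_eq (t : (g ⊗[R] g) ⊗[R] (g ⊗[R] g)) :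
    LLs R t = LL1 R t + LL2 R t + LL3 R t := rfl

end S6

/-- over an integral domain `R` of characteristic `0`, for a (split simple) Lie
algebra `g` whose Casimir element `Ω` spans the ad-invariants, is fixed by all automorphisms
and is torsion-free, and an `r`-matrix `r` with `r + κ(r) = λΩ`, `λ ∈ R*`: if `α, β ∈ R*` and
the Lie bialgebras `(g, ∂(αr))` and `(g, ∂(βr))` are isomorphic, then `β = α` or `β = -α`. -/
theorem stmt6 {R : Type*} [CommRing R] [IsDomain R] [Algebra ℚ R]
    {g : Type*} [LieRing g] [LieAlgebra R g]
    (Ω : g ⊗[R] g)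
    (hinv : {s : g ⊗[R] g | ∀ a : g, adT R a s = 0} = {s : g ⊗[R] g | ∃ c : R, s = c • Ω})
    (htf : ∀ c : R, c • Ω = 0 → c = 0)
    (hfix : ∀ ψ : g ≃ₗ⁅R⁆ g,
      TensorProduct.map ψ.toLinearEquiv.toLinearMap ψ.toLinearEquiv.toLinearMap Ω = Ω)
    (htfbr : ∀ c : R, c • br1213 R Ω = 0 → c = 0)
    (r : g ⊗[R] g) (hcyb : cyb R r = 0) (lam : R) (hlam : IsUnit lam)
    (hsym : r + (TensorProduct.comm R g g) r = lam • Ω)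
    (α β : R) (hα : IsUnit α) (hβ : IsUnit β)
    (hiso : ∃ φ : g ≃ₗ⁅R⁆ g, ∀ a : g,
      TensorProduct.map φ.toLinearEquiv.toLinearMap φ.toLinearEquiv.toLinearMap
          (adT R a (α • r)) = adT R (φ a) (β • r)) :
    β = α ∨ β = -α := by
  obtain ⟨φ, hφ⟩ := hiso
  set Φ : g ⊗[R] g →ₗ[R] g ⊗[R] g :=
    TensorProduct.map φ.toLinearEquiv.toLinearMap φ.toLinearEquiv.toLinearMap with hΦ
  set r' : g ⊗[R] g := Φ r with hr'
  -- Ω is ad-invariant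
  have hΩinv : ∀ a : g, adT R a Ω = 0 := by
    have h : Ω ∈ {s : g ⊗[R] g | ∃ c : R, s = c • Ω} := ⟨1, (one_smul R Ω).symm⟩
    rw [← hinv] at h
    exact h
  -- r' symmetrization
  have hκr' : r' + TensorProduct.comm R g g r' = lam • Ω := by
    rw [hr', hΦ, ← S6.comm_equiv, ← map_add, hsym, map_smul, hfix φ]
  -- r' satisfies CYB
  have hcyb' : cyb R r' = 0 := by
    rw [S6.cyb_eq, hr', hΦ]
    have h : S6.LLs R
        ((TensorProduct.map φ.toLinearEquiv.toLinearMap φ.toLinearEquiv.toLinearMap r) ⊗ₜ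
          (TensorProduct.map φ.toLinearEquiv.toLinearMap φ.toLinearEquiv.toLinearMap r))
        = TensorProduct.map φ.toLinearEquiv.toLinearMap
            (TensorProduct.map φ.toLinearEquiv.toLinearMap φ.toLinearEquiv.toLinearMap)
            (S6.LLs R (r ⊗ₜ r)) := by
      rw [S6.LLs_eq, S6.LLs_eq, map_add, map_add,
        S6.LL1_equiv, S6.LL2_equiv, S6.LL3_equiv]
    rw [h, ← S6.cyb_eq, hcyb, map_zero]
  -- the difference is invariant
  have hstep : ∀ b : g, adT R b (α • r' - β • r) = 0 := by
    intro b
    obtain ⟨a, rfl⟩ : ∃ a, φ a = b := ⟨φ.symm b, φ.apply_symm_apply b⟩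
    have h2 : adT R (φ a) (α • r') = adT R (φ a) (β • r) := by
      calc adT R (φ a) (α • r') = α • adT R (φ a) (Φ r) := by rw [map_smul, hr']
        _ = α • Φ (adT R a r) := by rw [hΦ, S6.adT_equiv]
        _ = Φ (adT R a (α • r)) := by rw [map_smul, map_smul]
        _ = adT R (φ a) (β • r) := hφ a
    rw [map_sub, h2, sub_self]
  obtain ⟨c, hc⟩ : ∃ c : R, α • r' - β • r = c • Ω := by
    have h : (α • r' - β • r) ∈ {s : g ⊗[R] g | ∀ a : g, adT R a s = 0} := hstep
    rw [hinv] at h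
    exact h
  -- key values of LLs
  have hΩΩ : S6.LLs R (Ω ⊗ₜ Ω) = br1213 R Ω := by
    rw [S6.LLs_eq, S6.br_eq, add_assoc, S6.K1 Ω hΩinv Ω, add_zero]
  have hL3ΩΩ : S6.LL3 R (Ω ⊗ₜ Ω) = S6.LL1 R (Ω ⊗ₜ Ω) := by
    have k1 := S6.K1 Ω hΩinv Ω
    have k2 := S6.K2 Ω hΩinv Ω
    have h : S6.LL3 R (Ω ⊗ₜ Ω) = - S6.LL2 R (Ω ⊗ₜ Ω) := by
      rw [eq_neg_iff_add_eq_zero, add_comm]; exact k1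
    rw [h, neg_eq_iff_add_eq_zero, add_comm]
    exact k2
  have hsum : α • r' + TensorProduct.comm R g g (α • r') = (α * lam) • Ω := by
    rw [map_smul, ← smul_add, hκr', smul_smul]
  -- two is a unit
  have h2unit : IsUnit (2 : R) := by
    have h : (algebraMap ℚ R) 2 = 2 := map_ofNat _ 2
    rw [← h]
    exact IsUnit.map _ (isUnit_iff_ne_zero.mpr (by norm_num))
  -- the mixed term
  have hS : S6.LL1 R ((α • r') ⊗ₜ Ω) + S6.LL3 R (Ω ⊗ₜ (α • r'))
      = (α * lam) • br1213 R Ω := by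
    have hdouble :
        (2 : R) • (S6.LL1 R ((α • r') ⊗ₜ Ω) + S6.LL3 R (Ω ⊗ₜ (α • r')))
          = (2 : R) • ((α * lam) • br1213 R Ω) := by
      have hF := S6.Fsym Ω hΩinv (α • r')
      calc (2 : R) • (S6.LL1 R ((α • r') ⊗ₜ Ω) + S6.LL3 R (Ω ⊗ₜ (α • r')))
          = (S6.LL1 R ((α • r') ⊗ₜ Ω) + S6.LL3 R (Ω ⊗ₜ (α • r')))
            + (S6.LL1 R ((TensorProduct.comm R g g (α • r')) ⊗ₜ Ω)
              + S6.LL3 R (Ω ⊗ₜ (TensorProduct.comm R g g (α • r')))) := by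
            rw [hF]; module
        _ = S6.LL1 R (((α • r') + TensorProduct.comm R g g (α • r')) ⊗ₜ Ω)
            + S6.LL3 R (Ω ⊗ₜ ((α • r') + TensorProduct.comm R g g (α • r'))) := by
            rw [add_tmul, tmul_add, map_add, map_add]; abel
        _ = (α * lam) • (S6.LL1 R (Ω ⊗ₜ Ω) + S6.LL3 R (Ω ⊗ₜ Ω)) := by
            rw [hsum, ← smul_tmul', tmul_smul, map_smul, map_smul, smul_add]
        _ = (2 : R) • ((α * lam) • br1213 R Ω) := by
            rw [hL3ΩΩ, ← S6.br_eq]; module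
    obtain ⟨u, hu⟩ := h2unit
    have h := congrArg (fun z => ((↑u⁻¹ : R)) • z) hdouble
    simp only [← hu, smul_smul, Units.inv_mul, one_smul] at h
    rwa [← mul_assoc, Units.inv_mul, one_mul] at h
  -- expansion of cyb (β • r)
  have hβr : β • r = α • r' - c • Ω := by rw [← hc]; abel
  have hzero : (0 : g ⊗[R] (g ⊗[R] g)) = (c * c - c * (α * lam)) • br1213 R Ω := by
    have e1 : cyb R (β • r) = 0 := by
      rw [S6.cyb_eq]
      simp only [smul_tmul, tmul_smul, map_smul]
      rw [← S6.cyb_eq, hcyb, smul_zero, smul_zero]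
    have e2 : S6.LLs R ((α • r') ⊗ₜ (α • r')) = 0 := by
      simp only [smul_tmul, tmul_smul, map_smul]
      rw [← S6.cyb_eq, hcyb', smul_zero, smul_zero]
    have e3 : cyb R (β • r)
        = S6.LLs R ((α • r') ⊗ₜ (α • r'))
          - c • (S6.LLs R ((α • r') ⊗ₜ Ω) + S6.LLs R (Ω ⊗ₜ (α • r')))
          + (c * c) • S6.LLs R (Ω ⊗ₜ Ω) := by
      rw [hβr, S6.cyb_eq, sub_tmul, tmul_sub, tmul_sub, map_sub, map_sub, map_sub]
      simp only [smul_tmul, tmul_smul, map_smul]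
      module
    have e4 : S6.LLs R ((α • r') ⊗ₜ Ω) + S6.LLs R (Ω ⊗ₜ (α • r'))
        = (α * lam) • br1213 R Ω := by
      rw [S6.LLs_eq, S6.LLs_eq, add_assoc (S6.LL1 R ((α • r') ⊗ₜ Ω)),
        S6.K1 Ω hΩinv (α • r'), add_zero,
        S6.K2 Ω hΩinv (α • r'), zero_add, hS]
    rw [e1, e2, e4, hΩΩ] at e3
    have h : (c * c - c * (α * lam)) • br1213 R Ω
        = 0 - c • ((α * lam) • br1213 R Ω) + (c * c) • br1213 R Ω := by module
    rw [h]
    exact e3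
  have hcc : c * c - c * (α * lam) = 0 := htfbr _ hzero.symm
  have hcases : c = 0 ∨ c = α * lam := by
    have h : c * (c - α * lam) = 0 := by linear_combination hcc
    rcases mul_eq_zero.mp h with h0 | h1
    · exact Or.inl h0
    · exact Or.inr (sub_eq_zero.mp h1)
  have hlamne : lam ≠ 0 := hlam.ne_zero
  rcases hcases with h0 | h1
  · -- c = 0 : α r' = β r, hence β = α
    left
    rw [h0, zero_smul] at hc
    have heq : α • r' = β • r := sub_eq_zero.mp hc
    have h5 : (α * lam) • Ω = (β * lam) • Ω := by
      have h6 : α • r' + TensorProduct.comm R g g (α • r')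
          = β • r + TensorProduct.comm R g g (β • r) := by rw [heq]
      rw [hsum] at h6
      rw [h6, map_smul, ← smul_add, hsym, smul_smul]
    have h7 : ((β - α) * lam) • Ω = 0 := by
      have h : ((β - α) * lam) • Ω = (β * lam) • Ω - (α * lam) • Ω := by module
      rw [h, ← h5, sub_self]
    have h8 := htf _ h7
    rcases mul_eq_zero.mp h8 with h9 | h9
    · have := sub_eq_zero.mp h9; exact this
    · exact absurd h9 hlamne
  · -- c = α lam : β = -α
    right
    rw [h1] at hc
    have h5 : - (β • r) = α • TensorProduct.comm R g g r' := by
      have h6 : α • r' - β • r = α • r' + α • TensorProduct.comm R g g r' := by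
        rw [hc, ← smul_add, hκr', smul_smul]
      calc - (β • r) = (α • r' - β • r) - α • r' := by abel
        _ = α • TensorProduct.comm R g g r' := by rw [h6]; abel
    have h7 : - (β • TensorProduct.comm R g g r) = α • r' := by
      have h := congrArg (TensorProduct.comm R g g) h5
      rw [map_neg, map_smul, map_smul, S6.comm_comm] at h
      exact h
    have h8 : - (β • (lam • Ω)) = α • (lam • Ω) := by
      calc - (β • (lam • Ω)) = - (β • (r + TensorProduct.comm R g g r)) := by rw [hsym]
        _ = - (β • r) + - (β • TensorProduct.comm R g g r) := by rw [smul_add]; abel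
        _ = α • TensorProduct.comm R g g r' + α • r' := by rw [h5, h7]
        _ = α • (r' + TensorProduct.comm R g g r') := by rw [smul_add]; abel
        _ = α • (lam • Ω) := by rw [hκr']
    have h9 : ((-β - α) * lam) • Ω = 0 := by
      have h : ((-β - α) * lam) • Ω = - (β • (lam • Ω)) - α • (lam • Ω) := by module
      rw [h, h8, sub_self]
    have h10 := htf _ h9
    rcases mul_eq_zero.mp h10 with h11 | h11
    · linear_combination -h11
    · exact absurd h11 hlamne
end

section
/- Let Γ₁ ⊆ Γ be a set of simple roots, τ: Γ₁ → Γ₂ an admissible bijection (for every α ∈ Γ₁ there exists k ≥ 1 with τ^k(α) ∉ Γ₁), and π a permutation of Γ preserving Γ₁ (π(Γ₁) = Γ₁). For α ∈ Γ₁ let l_α ≥ 1 be the unique integer with τ^{l_α}(α) ∉ Γ₁ and τ^{l_α−1}(α) ∈ Γ₁. Suppose that for every α ∈ Γ₁ the equality of sets {πτ(α), πτ²(α), …, πτ^{l_α}(α)} = {τπ(α), τ²π(α), …, τ^{l_α}π(α)} holds. Then πτ(α) = τπ(α) for all α ∈ Γ₁. -/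
/-- let `τ : Γ₁ → Γ₂` be an admissible bijection and `π` a permutation of `Γ`
preserving `Γ₁`.  If for every `α ∈ Γ₁` the sets `{πτ(α), …, πτ^{l_α}(α)}` and
`{τπ(α), …, τ^{l_α}π(α)}` coincide, then `πτ(α) = τπ(α)` for all `α ∈ Γ₁`. -/
theorem stmt11 {Γ : Type*} [Finite Γ] (Γ₁ Γ₂ : Set Γ) (τ : Γ → Γ)
    (hinj : Function.Injective τ) (himg : τ '' Γ₁ = Γ₂)
    -- admissibility
    (hadm : ∀ α ∈ Γ₁, ∃ k, 1 ≤ k ∧ τ^[k] α ∉ Γ₁)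
    (π : Equiv.Perm Γ) (hπ1 : ⇑π '' Γ₁ = Γ₁) (hπ2 : ⇑π '' Γ₂ = Γ₂)
    -- `l α` is the first exit time of the `τ`-orbit of `α` from `Γ₁`
    (l : Γ → ℕ)
    (hl : ∀ α ∈ Γ₁, 1 ≤ l α ∧ τ^[l α] α ∉ Γ₁ ∧ ∀ j, 1 ≤ j → j < l α → τ^[j] α ∈ Γ₁)
    (hsets : ∀ α ∈ Γ₁,
      {x : Γ | ∃ k, 1 ≤ k ∧ k ≤ l α ∧ x = π (τ^[k] α)} =
        {x : Γ | ∃ k, 1 ≤ k ∧ k ≤ l α ∧ x = τ^[k] (π α)}) :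
    ∀ α ∈ Γ₁, π (τ α) = τ (π α) := by
  classical
  -- membership transfer along π
  have hmem : ∀ a : Γ, a ∈ Γ₁ ↔ π a ∈ Γ₁ := by
    intro a
    constructor
    · intro ha
      have : π a ∈ ⇑π '' Γ₁ := Set.mem_image_of_mem _ ha
      rwa [hπ1] at this
    · intro ha
      rw [← hπ1] at ha
      obtain ⟨b, hb, hba⟩ := ha
      rwa [π.injective hba] at hb
  -- uniqueness of the first exit time
  have luniq : ∀ α ∈ Γ₁, ∀ m, 1 ≤ m → τ^[m] α ∉ Γ₁ →
      (∀ j, 1 ≤ j → j < m → τ^[j] α ∈ Γ₁) → l α = m := by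
    intro α hα m hm1 hmout hmin
    obtain ⟨h1, h2, h3⟩ := hl α hα
    rcases lt_trichotomy (l α) m with h | h | h
    · exact absurd (hmin _ h1 h) h2
    · exact h
    · exact absurd (h3 _ hm1 h) hmout
  -- step 1 : l (π α) ≤ l α
  have hle : ∀ α ∈ Γ₁, l (π α) ≤ l α := by
    intro α hα
    by_contra h
    push_neg at h
    obtain ⟨h1, h2, h3⟩ := hl α hα
    have hπα : π α ∈ Γ₁ := (hmem α).1 hα
    have hx : π (τ^[l α] α) ∈ {x : Γ | ∃ k, 1 ≤ k ∧ k ≤ l α ∧ x = π (τ^[k] α)} :=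
      ⟨l α, h1, le_refl _, rfl⟩
    rw [hsets α hα] at hx
    obtain ⟨k, hk1, hk2, hkeq⟩ := hx
    have hkΓ : τ^[k] (π α) ∈ Γ₁ := (hl (π α) hπα).2.2 k hk1 (lt_of_le_of_lt hk2 h)
    rw [← hkeq] at hkΓ
    exact h2 ((hmem _).2 hkΓ)
  -- step 2 : l (π α) = l α, via summing over Γ₁
  have heq : ∀ α ∈ Γ₁, l (π α) = l α := by
    have hfin : Γ₁.Finite := Set.toFinite Γ₁
    set s : Finset Γ := hfin.toFinset with hs
    have hmem' : ∀ a : Γ, a ∈ s ↔ a ∈ Γ₁ := fun a => hfin.mem_toFinset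
    have himg' : s.image π = s := by
      apply Finset.ext
      intro b
      simp only [Finset.mem_image]
      constructor
      · rintro ⟨a, ha, rfl⟩
        exact (hmem' _).2 ((hmem a).1 ((hmem' _).1 ha))
      · intro hb
        refine ⟨π.symm b, ?_, π.apply_symm_apply b⟩
        have : π (π.symm b) ∈ Γ₁ := by rw [π.apply_symm_apply]; exact (hmem' _).1 hb
        exact (hmem' _).2 ((hmem _).2 this)
    have hsum : ∑ a ∈ s, l (π a) = ∑ a ∈ s, l a := by
      rw [← Finset.sum_image (f := l) (g := π) (fun x _ y _ h => π.injective h), himg']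
    have hpt : ∀ a ∈ s, l (π a) = l a :=
      (Finset.sum_eq_sum_iff_of_le (fun i hi => hle i ((hmem' i).1 hi))).1 hsum
    intro α hα
    exact hpt α ((hmem' α).2 hα)
  -- step 3 : strong induction on l α
  have main : ∀ n : ℕ, ∀ α ∈ Γ₁, l α = n → π (τ α) = τ (π α) := by
    intro n
    induction n using Nat.strong_induction_on with
    | _ n ih =>
      intro α hα hn
      obtain ⟨h1, h2, h3⟩ := hl α hα
      have hπα : π α ∈ Γ₁ := (hmem α).1 hα
      rcases eq_or_lt_of_le (hn ▸ h1 : 1 ≤ n) with hn1 | hn2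
      · -- base case n = 1
        have hx : τ^[1] (π α) ∈ {x : Γ | ∃ k, 1 ≤ k ∧ k ≤ l α ∧ x = τ^[k] (π α)} :=
          ⟨1, le_refl _, by omega, rfl⟩
        rw [← hsets α hα] at hx
        obtain ⟨k, hk1, hk2, hkeq⟩ := hx
        have hk : k = 1 := by omega
        subst hk
        simpa using hkeq.symm
      · -- inductive step : n ≥ 2
        -- l of points along the orbit
        have horb : ∀ k, 1 ≤ k → k < n → τ^[k] α ∈ Γ₁ ∧ l (τ^[k] α) = n - k := by
          intro k hk1 hk2
          have hkΓ : τ^[k] α ∈ Γ₁ := h3 k hk1 (hn ▸ hk2)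
          refine ⟨hkΓ, luniq _ hkΓ (n - k) (by omega) ?_ ?_⟩
          · rw [← Function.iterate_add_apply]
            have : n - k + k = l α := by omega
            rwa [this]
          · intro j hj1 hj2
            rw [← Function.iterate_add_apply]
            exact h3 (j + k) (by omega) (by omega)
        -- chaining the inductive hypothesis along the orbit
        have chain : ∀ k, 1 ≤ k → k ≤ n → π (τ^[k] α) = τ^[k - 1] (π (τ α)) := by
          intro k
          induction k with
          | zero => omega
          | succ m ihm =>
            intro _ hm2
            rcases Nat.eq_or_lt_of_le (Nat.one_le_iff_ne_zero.2 (by omega) : 1 ≤ m + 1)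
              with hm | hm
            · simp [← hm]
            · have hm1 : 1 ≤ m := by omega
              have hmn : m < n := by omega
              obtain ⟨hmΓ, hml⟩ := horb m hm1 hmn
              have hcomm : π (τ (τ^[m] α)) = τ (π (τ^[m] α)) :=
                ih (n - m) (by omega) (τ^[m] α) hmΓ hml
              calc π (τ^[m + 1] α) = π (τ (τ^[m] α)) := by
                    rw [Function.iterate_succ_apply']
                _ = τ (π (τ^[m] α)) := hcomm
                _ = τ (τ^[m - 1] (π (τ α))) := by rw [ihm hm1 (by omega)]
                _ = τ^[m + 1 - 1] (π (τ α)) := by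
                    rw [← Function.iterate_succ_apply' τ (m - 1)]
                    congr 1
                    omega
        -- the unique element outside Γ₁
        have hlπ : l (π α) = n := by rw [heq α hα, hn]
        have hout : τ^[n] (π α) ∉ Γ₁ := by
          have := (hl (π α) hπα).2.1
          rwa [hlπ] at this
        have hx : τ^[n] (π α) ∈ {x : Γ | ∃ k, 1 ≤ k ∧ k ≤ l α ∧ x = τ^[k] (π α)} :=
          ⟨n, by omega, by omega, rfl⟩
        rw [← hsets α hα] at hx
        obtain ⟨k', hk1', hk2', hkeq⟩ := hx
        have hkn : k' = n := by
          by_contra hkn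
          have hkΓ : τ^[k'] α ∈ Γ₁ := h3 k' hk1' (by omega)
          have : π (τ^[k'] α) ∈ Γ₁ := (hmem _).1 hkΓ
          rw [← hkeq] at this
          exact hout this
        rw [hkn] at hkeq
        -- cancel τ^[n-1]
        have e1 : τ^[n] (π α) = τ^[n - 1] (π (τ α)) := by
          rw [hkeq, chain n (by omega) (le_refl n)]
        have e2 : τ^[n] (π α) = τ^[n - 1] (τ (π α)) := by
          have : n = (n - 1) + 1 := by omega
          rw [this, Function.iterate_succ_apply]
          simp
        exact Function.Injective.iterate hinj (n - 1) (e1.symm.trans e2)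
  intro α hα
  exact main (l α) α hα rfl
end

section
/- Let Γ₁ ⊆ Γ be a finite set with an admissible injection τ: Γ₁ → Γ (for each α ∈ Γ₁ there is k ≥ 1 with τ^k(α) ∉ Γ₁), and let π be a permutation of Γ with π(Γ₁) = Γ₂ := τ(Γ₁) and π(Γ₂) = Γ₁. For α ∈ Γ₁ define l_α as the least k ≥ 1 with τ^k(α) ∉ Γ₁. Suppose for every α ∈ Γ₁ the sets {πτ(α), …, πτ^{l_α}(α)} and {τ^{-1}π(α), …, τ^{-l_α}π(α)} are equal. Then τ^{-1}π(α) = πτ(α) for all α ∈ Γ₁, i.e. πτπ^{-1} = τ^{-1} on Γ₁. -/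
/-- let `τ : Γ₁ → Γ₂ = τ(Γ₁)` be an admissible bijection and `π` a permutation
of `Γ` with `π(Γ₁) = Γ₂` and `π(Γ₂) = Γ₁`.  If for every `α ∈ Γ₁` the sets
`{πτ(α), …, πτ^{l_α}(α)}` and `{τ^{-1}π(α), …, τ^{-l_α}π(α)}` coincide, then
`τ^{-1}π(α) = πτ(α)` for all `α ∈ Γ₁`, i.e. `πτπ^{-1} = τ^{-1}` on `Γ₁`. -/
theorem stmt12 {Γ : Type*} [Finite Γ] (Γ₁ : Set Γ) (τ : Equiv.Perm Γ)
    (hadm : ∀ α ∈ Γ₁, ∃ k, 1 ≤ k ∧ (⇑τ)^[k] α ∉ Γ₁)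
    (π : Equiv.Perm Γ) (hπ1 : ⇑π '' Γ₁ = ⇑τ '' Γ₁) (hπ2 : ⇑π '' (⇑τ '' Γ₁) = Γ₁)
    (l : Γ → ℕ)
    (hl : ∀ α ∈ Γ₁, 1 ≤ l α ∧ (⇑τ)^[l α] α ∉ Γ₁ ∧ ∀ j, 1 ≤ j → j < l α → (⇑τ)^[j] α ∈ Γ₁)
    (hsets : ∀ α ∈ Γ₁,
      {x : Γ | ∃ k, 1 ≤ k ∧ k ≤ l α ∧ x = π ((⇑τ)^[k] α)} =
        {x : Γ | ∃ k, 1 ≤ k ∧ k ≤ l α ∧ x = (⇑τ.symm)^[k] (π α)}) :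
    ∀ α ∈ Γ₁, τ.symm (π α) = π (τ α) := by
  have noper : ∀ α ∈ Γ₁, ∀ p, 1 ≤ p → p < l α → (⇑τ)^[p] α ≠ α := by
    intro α hα p hp1 hp2 hper
    obtain ⟨h1, h2, h3⟩ := hl α hα
    have hqp : ∀ q : ℕ, (⇑τ)^[q * p] α = α := by
      intro q
      induction q with
      | zero => simp
      | succ q ih => rw [Nat.succ_mul, Function.iterate_add_apply, hper, ih]
    have hmod : (⇑τ)^[l α] α = (⇑τ)^[l α % p] α := by
      conv_lhs => rw [← Nat.mod_add_div (l α) p]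
      rw [Function.iterate_add_apply, Nat.mul_comm, hqp]
    rcases Nat.eq_zero_or_pos (l α % p) with h0 | h0
    · apply h2
      rw [hmod, h0]
      simpa using hα
    · apply h2
      rw [hmod]
      exact h3 _ h0 (lt_trans (Nat.mod_lt _ (by omega)) hp2)
  have main : ∀ n : ℕ, ∀ α, α ∈ Γ₁ → l α ≤ n → τ.symm (π α) = π (τ α) := by
    intro n
    induction n with
    | zero =>
      intro α hα hn
      have := (hl α hα).1
      omega
    | succ n ih =>
      intro α hα hn
      have hA : τ.symm (π α) ∈ {x : Γ | ∃ k, 1 ≤ k ∧ k ≤ l α ∧ x = π ((⇑τ)^[k] α)} := by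
        rw [hsets α hα]
        exact ⟨1, le_refl 1, (hl α hα).1, by simp⟩
      obtain ⟨k, hk1, hk2, hk3⟩ := hA
      rcases eq_or_lt_of_le hk1 with h1 | h1
      · rw [hk3, ← h1]; simp
      · exfalso
        obtain ⟨h1', h2', h3'⟩ := hl α hα
        have hβ : (⇑τ)^[k-1] α ∈ Γ₁ := h3' (k-1) (by omega) (by omega)
        have hlβ : l ((⇑τ)^[k-1] α) ≤ n := by
          obtain ⟨hb1, hb2, hb3⟩ := hl _ hβ
          by_contra hcon
          push_neg at hcon
          have h4 : (⇑τ)^[l α - k + 1] ((⇑τ)^[k-1] α) ∈ Γ₁ := hb3 _ (by omega) (by omega)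
          rw [← Function.iterate_add_apply] at h4
          have heq : l α - k + 1 + (k-1) = l α := by omega
          rw [heq] at h4
          exact h2' h4
        have hid := ih _ hβ hlβ
        have hstep : π ((⇑τ)^[k] α) = π (τ ((⇑τ)^[k-1] α)) := by
          have hkk : k = (k-1)+1 := by omega
          conv_lhs => rw [hkk, Function.iterate_succ_apply']
        rw [hstep, ← hid] at hk3
        clear hstep
        have hπ : π α = π ((⇑τ)^[k-1] α) := τ.symm.injective hk3
        have hfix := π.injective hπ
        exact noper α hα (k-1) (by omega) (by omega) hfix.symm
  intro α hα
  exact main (l α) α hα le_rfl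
end

section
/- Let K be a field of characteristic 0, L = K(√d) a quadratic extension, σ the nontrivial element of Gal(L/K). For diagonal matrices D_u, D_v, D ∈ H(L) (the diagonal torus in GL_n(L) modulo center, i.e. considered up to scalars via the adjoint action), the relation Ad_{D_v}χ = Ad_D^{-1} Ad_{D_u} χ Ad_{σ(D)} (where χ(x) = −x^t is the Chevalley automorphism of sl_n and D^t = D) holds if and only if Ad_{D_u} = Ad_{D·σ(D)·D_v}. Consequently, two such cocycles Ad_{D_u}χ and Ad_{D_v}χ are equivalent (via some Ad_D, D ∈ H(L)) if and only if each entry (up to common scalar) of D_u differs from the corresponding entry of D_v by an element of the norm group N_{L/K}(L*). -/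
open Matrix

/-- Conjugation `Ad_D : x ↦ D x D⁻¹` by the invertible diagonal matrix with entries `d`. -/
noncomputable def AdDiag {L : Type*} [Field L] {n : ℕ} (d : Fin n → Lˣ)
    (x : Matrix (Fin n) (Fin n) L) : Matrix (Fin n) (Fin n) L :=
  Matrix.diagonal (fun i => (d i : L)) * x * Matrix.diagonal (fun i => (((d i)⁻¹ : Lˣ) : L))

/-- The Chevalley automorphism `χ : x ↦ -xᵀ`. -/
def chev {L : Type*} [Field L] {n : ℕ} (x : Matrix (Fin n) (Fin n) L) :
    Matrix (Fin n) (Fin n) L := -xᵀ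

/-! Entrywise, `Ad_D` scales `x i j` by `d i / d j`, and `χ ∘ Ad_D = Ad_{D⁻¹} ∘ χ`. Hence both
sides of the twisted relation are diagonal conjugations (composed with the bijection `χ`), and
two diagonal conjugations agree exactly when their diagonals differ by a common scalar (test
them on the matrix units). Existence of `D` then amounts to choosing, entry by entry, the norm
`y σ(y)`. -/

section AdDiag

variable {L : Type*} [Field L] {n : ℕ}

lemma adDiag_apply (d : Fin n → Lˣ) (x : Matrix (Fin n) (Fin n) L) (i j : Fin n) :
    AdDiag d x i j = d i * x i j * (d j : L)⁻¹ := by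
  simp [AdDiag, mul_diagonal, diagonal_mul]

lemma adDiag_adDiag (a b : Fin n → Lˣ) (x : Matrix (Fin n) (Fin n) L) :
    AdDiag a (AdDiag b x) = AdDiag (a * b) x := by
  ext i j
  simp only [adDiag_apply, Pi.mul_apply, Units.val_mul, mul_inv]
  ring

lemma chev_adDiag (a : Fin n → Lˣ) (x : Matrix (Fin n) (Fin n) L) :
    chev (AdDiag a x) = AdDiag a⁻¹ (chev x) := by
  ext i j
  simp only [chev, Matrix.neg_apply, transpose_apply, adDiag_apply, Pi.inv_apply,
    Units.val_inv_eq_inv_val, inv_inv]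
  ring

lemma chev_involutive : Function.Involutive (chev : Matrix (Fin n) (Fin n) L → _) := by
  intro x
  simp [chev]

lemma adDiag_eq_adDiag_iff (a b : Fin n → Lˣ) :
    (∀ x, AdDiag a x = AdDiag b x) ↔ ∃ c : Lˣ, ∀ i, a i = c * b i := by
  constructor
  · intro h
    rcases isEmpty_or_nonempty (Fin n) with hn | ⟨⟨j⟩⟩
    · exact ⟨1, hn.elim⟩
    refine ⟨a j * (b j)⁻¹, fun i => Units.ext ?_⟩
    have hij := congrFun (congrFun (h (single i j 1)) i) j
    simp only [adDiag_apply, single_apply_same, mul_one] at hij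
    push_cast
    field_simp at hij ⊢
    linear_combination hij
  · rintro ⟨c, hc⟩ x
    ext i j
    simp only [adDiag_apply, hc, Units.val_mul, mul_inv]
    field_simp

lemma adDiag_chev_twisted_iff (du dv d e : Fin n → Lˣ) :
    (∀ x, AdDiag dv (chev x) = AdDiag d⁻¹ (AdDiag du (chev (AdDiag e x)))) ↔
      ∀ x, AdDiag du x = AdDiag (d * e * dv) x := by
  simp only [chev_adDiag, adDiag_adDiag]
  rw [← chev_involutive.surjective.forall (p := fun y => AdDiag dv y = AdDiag _ y),
    adDiag_eq_adDiag_iff, adDiag_eq_adDiag_iff]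
  constructor <;> rintro ⟨c, hc⟩ <;> refine ⟨c⁻¹, fun i => Units.ext ?_⟩ <;>
    simp only [hc i, Pi.mul_apply, Pi.inv_apply] <;> push_cast <;> field_simp

lemma exists_adDiag_eq_iff (du dv : Fin n → Lˣ) (N : Lˣ → Lˣ) :
    (∃ d : Fin n → Lˣ, ∀ x, AdDiag du x = AdDiag (fun i => N (d i) * dv i) x) ↔
      ∃ c : Lˣ, ∀ i, ∃ y, du i = c * N y * dv i := by
  simp only [adDiag_eq_adDiag_iff, ← mul_assoc]
  rw [exists_comm]
  simp only [Classical.skolem]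

end AdDiag

theorem stmt14_general {K L : Type*} [Field K] [Field L] [Algebra K L] (σ : L ≃ₐ[K] L)
    {n : ℕ} (du dv : Fin n → Lˣ) :
    (∀ d : Fin n → Lˣ,
      (∀ x : Matrix (Fin n) (Fin n) L,
          AdDiag dv (chev x) =
            AdDiag (fun i => (d i)⁻¹)
              (AdDiag du (chev (AdDiag
                (fun i => Units.map σ.toAlgHom.toRingHom.toMonoidHom (d i)) x)))) ↔
        (∀ x : Matrix (Fin n) (Fin n) L,
          AdDiag du x =
            AdDiag (fun i =>
              d i * Units.map σ.toAlgHom.toRingHom.toMonoidHom (d i) * dv i) x)) ∧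
    ((∃ d : Fin n → Lˣ,
      ∀ x : Matrix (Fin n) (Fin n) L,
        AdDiag dv (chev x) =
          AdDiag (fun i => (d i)⁻¹)
            (AdDiag du (chev (AdDiag
              (fun i => Units.map σ.toAlgHom.toRingHom.toMonoidHom (d i)) x)))) ↔
      (∃ c : Lˣ, ∀ i : Fin n, ∃ y : Lˣ,
        (du i : L) = (c : L) * ((y : L) * σ (y : L)) * (dv i : L))) := by
  have twisted_iff := fun d => adDiag_chev_twisted_iff du dv d
    (fun i => Units.map σ.toAlgHom.toRingHom.toMonoidHom (d i))
  refine ⟨twisted_iff, (exists_congr twisted_iff).trans ?_⟩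
  refine (exists_adDiag_eq_iff du dv
    fun y => y * Units.map σ.toAlgHom.toRingHom.toMonoidHom y).trans ?_
  simp [Units.ext_iff]

/-- let `L = K(√d)` be a quadratic extension of a field `K` of characteristic
`0` with nontrivial Galois automorphism `σ`.  For diagonal matrices `D_u, D_v, D` the
relation `Ad_{D_v}χ = Ad_D⁻¹ Ad_{D_u} χ Ad_{σ(D)}` holds iff
`Ad_{D_u} = Ad_{D·σ(D)·D_v}`; consequently such a `D` exists iff each entry of `D_u` differs
from the corresponding entry of `D_v` by a common scalar times an element of the norm group
`N_{L/K}(L*)`. -/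
theorem stmt14 {K L : Type*} [Field K] [Field L] [Algebra K L] [CharZero K]
    (hquad : Module.finrank K L = 2) (σ : L ≃ₐ[K] L) (hσ : σ ≠ (AlgEquiv.refl : L ≃ₐ[K] L))
    {n : ℕ} (du dv : Fin n → Lˣ) :
    (∀ d : Fin n → Lˣ,
      (∀ x : Matrix (Fin n) (Fin n) L,
          AdDiag dv (chev x) =
            AdDiag (fun i => (d i)⁻¹)
              (AdDiag du (chev (AdDiag
                (fun i => Units.map σ.toAlgHom.toRingHom.toMonoidHom (d i)) x)))) ↔
        (∀ x : Matrix (Fin n) (Fin n) L,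
          AdDiag du x =
            AdDiag (fun i =>
              d i * Units.map σ.toAlgHom.toRingHom.toMonoidHom (d i) * dv i) x)) ∧
    ((∃ d : Fin n → Lˣ,
      ∀ x : Matrix (Fin n) (Fin n) L,
        AdDiag dv (chev x) =
          AdDiag (fun i => (d i)⁻¹)
            (AdDiag du (chev (AdDiag
              (fun i => Units.map σ.toAlgHom.toRingHom.toMonoidHom (d i)) x)))) ↔
      (∃ c : Lˣ, ∀ i : Fin n, ∃ y : Lˣ,
        (du i : L) = (c : L) * ((y : L) * σ (y : L)) * (dv i : L))) :=
  stmt14_general σ du dv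
end
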